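/- arXiv:math/0405157 — 4 statements merged into one kernel-verified Lean document; each statement's English description precedes it below -/
import Mathlib

section
/- Let Z ≥ 0 be a nonnegative real-valued random variable and f a nonnegative nondecreasing function on [0,∞). Then E[Z·f(2Z)] ≥ (E[Z]/2)·f(E[Z]). -/
/-!
For `a, z ≥ 0` one has `f a * (z - a / 2) ≤ z * f (2 * z)`. Taking `a = E[Z]` and `z = Z ω`
and integrating, the left side becomes `f (E[Z]) * (E[Z] - E[Z] / 2)` because `ℙ` has mass one.
-/

open MeasureTheory ProbabilityTheory

/-- Below `2 z = a` the left side is nonpositive; above it, monotonicity gives `f a ≤ f (2 z)`. -/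
lemma mul_sub_half_le_mul_apply_two_mul {f : ℝ → ℝ} (hf0 : ∀ x, 0 ≤ x → 0 ≤ f x)
    (hfmono : MonotoneOn f (Set.Ici 0)) {a z : ℝ} (ha : 0 ≤ a) (hz : 0 ≤ z) :
    f a * (z - a / 2) ≤ z * f (2 * z) := by
  rcases lt_or_ge (2 * z) a with hlt | hge
  · nlinarith [hf0 a ha, hf0 (2 * z) (by positivity)]
  · have hfa : f a ≤ f (2 * z) := hfmono (Set.mem_Ici.2 ha) (Set.mem_Ici.2 (by positivity)) hge
    nlinarith [hf0 a ha]

theorem stmt_0_general {Ω : Type*} [MeasureSpace Ω] [IsProbabilityMeasure (ℙ : Measure Ω)]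
    (Z : Ω → ℝ) (hZ0 : ∀ ω, 0 ≤ Z ω) (hZint : Integrable Z)
    (f : ℝ → ℝ) (hf0 : ∀ x, 0 ≤ x → 0 ≤ f x) (hfmono : MonotoneOn f (Set.Ici 0))
    (hint : Integrable (fun ω => Z ω * f (2 * Z ω))) :
    (∫ ω, Z ω) / 2 * f (∫ ω, Z ω) ≤ ∫ ω, Z ω * f (2 * Z ω) := by
  set m := ∫ ω, Z ω
  have hm : 0 ≤ m := integral_nonneg hZ0
  calc m / 2 * f m = ∫ ω, f m * (Z ω - m / 2) := by
        rw [integral_const_mul, integral_sub hZint (integrable_const _), integral_const]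
        simp only [probReal_univ, one_smul]
        ring
    _ ≤ ∫ ω, Z ω * f (2 * Z ω) :=
        integral_mono ((hZint.sub (integrable_const _)).const_mul _) hint
          fun ω => mul_sub_half_le_mul_apply_two_mul hf0 hfmono hm (hZ0 ω)

/-- Lemma 4 of the paper: for a nonnegative random variable `Z` and a nonnegative
nondecreasing function `f` on `[0,∞)`, `E[Z·f(2Z)] ≥ (E[Z]/2)·f(E[Z])`. -/
theorem stmt_0 {Ω : Type*} [MeasureSpace Ω] [IsProbabilityMeasure (ℙ : Measure Ω)]
    (Z : Ω → ℝ) (hZmeas : Measurable Z) (hZ0 : ∀ ω, 0 ≤ Z ω) (hZint : Integrable Z)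
    (f : ℝ → ℝ) (hf0 : ∀ x, 0 ≤ x → 0 ≤ f x) (hfmono : MonotoneOn f (Set.Ici 0))
    (hint : Integrable (fun ω => Z ω * f (2 * Z ω))) :
    (∫ ω, Z ω) / 2 * f (∫ ω, Z ω) ≤ ∫ ω, Z ω * f (2 * Z ω) :=
  stmt_0_general Z hZ0 hZint f hf0 hfmono hint
end

section
/- Suppose L : [0,∞) → [0,∞) is differentiable and satisfies L'(t) ≤ -γ·L(t)·f(L(t)/2) for all t, where γ > 0 and f is a positive nondecreasing function. Then for every t ≥ ∫_{δ/2}^{L(0)/2} dz/(γ·z·f(z)) we have L(t) ≤ δ. -/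
open MeasureTheory intervalIntegral

/-- Lemma 6 of the paper (from Morris–Peres): if `L' ≤ -γ·L·f(L/2)` then `L t ≤ δ`
for all `t ≥ ∫_{δ/2}^{L 0/2} dz/(γ z f(z))`. -/
theorem stmt_1 (γ δ : ℝ) (hγ : 0 < γ)
    (f : ℝ → ℝ) (hfpos : ∀ x, 0 < x → 0 < f x) (hfmono : MonotoneOn f (Set.Ioi 0))
    (L : ℝ → ℝ) (hLdiff : Differentiable ℝ L) (hLnonneg : ∀ t, 0 ≤ L t)
    (hode : ∀ t, 0 ≤ t → deriv L t ≤ -γ * L t * f (L t / 2))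
    (hδ : 0 < δ) (hδL : δ ≤ L 0) :
    ∀ t : ℝ, (∫ z in (δ / 2)..(L 0 / 2), 1 / (γ * z * f z)) ≤ t → L t ≤ δ := by
  intro t ht
  have hδ4 : (0:ℝ) < δ / 4 := by linarith
  set c : ℝ := δ / 4 with hcdef
  set g : ℝ → ℝ := fun z => γ * max z c * f (max z c) with hgdef
  have hmaxpos : ∀ z : ℝ, 0 < max z c := fun z => lt_of_lt_of_le hδ4 (le_max_right _ _)
  have hgpos : ∀ z, 0 < g z := fun z =>
    mul_pos (mul_pos hγ (hmaxpos z)) (hfpos _ (hmaxpos z))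
  have hgmono : Monotone g := by
    intro zo zt hz
    have hm : max zo c ≤ max zt c := max_le_max hz le_rfl
    have hf2 : f (max zo c) ≤ f (max zt c) :=
      hfmono (Set.mem_Ioi.2 (hmaxpos zo)) (Set.mem_Ioi.2 (hmaxpos zt)) hm
    have h1 : γ * max zo c ≤ γ * max zt c := by nlinarith [hmaxpos zo]
    have := mul_le_mul h1 hf2 (hfpos _ (hmaxpos zo)).le
      (by positivity)
    simpa [hgdef] using this
  set h : ℝ → ℝ := fun z => (g z)⁻¹ with hhdef
  have hhpos : ∀ z, 0 < h z := fun z => inv_pos.2 (hgpos z)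
  have hhanti : Antitone h := fun zo zt hz =>
    inv_anti₀ (hgpos zo) (hgmono hz)
  set M : ℝ := (g c)⁻¹ with hMdef
  have hhM : ∀ z, h z ≤ M := by
    intro z
    have h1 : g c ≤ g (max z c) := hgmono (le_max_right z c)
    have h2 : g (max z c) = g z := by
      simp only [hgdef]
      rw [max_eq_left (le_max_right z c)]
    exact inv_anti₀ (hgpos c) (h2 ▸ h1)
  have hMpos : 0 < M := inv_pos.2 (hgpos c)
  have hhmeas : Measurable h := (hgmono.measurable).inv
  -- interval integrability of h everywhere
  have hint : ∀ a b : ℝ, IntervalIntegrable h volume a b := by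
    intro a b
    refine (_root_.intervalIntegrable_const (c := M) (μ := volume) (a := a) (b := b)).mono_fun'
      (hhmeas.aestronglyMeasurable.restrict) ?_
    filter_upwards with x
    simpa [Real.norm_eq_abs, abs_of_pos (hhpos x)] using hhM x
  -- key step estimate
  have hstep : ∀ u v : ℝ, u ≤ v → (v - u) * h v ≤ ∫ z in u..v, h z := by
    intro u v huv
    have h1 : (∫ _z in u..v, h v) ≤ ∫ z in u..v, h z := by
      refine integral_mono_on huv (_root_.intervalIntegrable_const) (hint u v) ?_
      intro x hx
      exact hhanti hx.2
    simpa [intervalIntegral.integral_const, smul_eq_mul] using h1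
  set G : ℝ → ℝ := fun x => ∫ z in (δ/2)..x, h z with hGdef
  have hGsub : ∀ u v : ℝ, G v - G u = ∫ z in u..v, h z := fun u v =>
    integral_interval_sub_left (hint _ _) (hint _ _)
  -- G is Lipschitz hence continuous
  have hGcont : Continuous G := by
    have : LipschitzWith (Real.toNNReal M) G := by
      refine LipschitzWith.of_dist_le_mul fun u v => ?_
      rw [Real.dist_eq, Real.dist_eq]
      have h1 : G u - G v = ∫ z in v..u, h z := hGsub v u
      have h2 : ‖∫ z in v..u, h z‖ ≤ M * |u - v| := by
        apply intervalIntegral.norm_integral_le_of_norm_le_const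
        intro x _
        simpa [Real.norm_eq_abs, abs_of_pos (hhpos x)] using hhM x
      rw [h1]
      rw [Real.norm_eq_abs] at h2
      simpa [Real.coe_toNNReal M hMpos.le] using h2
    exact this.continuous
  -- L is antitone on [0, ∞)
  have hderiv_nonpos : ∀ x : ℝ, 0 ≤ x → deriv L x ≤ 0 := by
    intro x hx
    have h1 := hode x hx
    rcases (hLnonneg x).eq_or_lt with h2 | h2
    · rw [← h2] at h1; simpa using h1
    · have h3 : 0 < f (L x / 2) := hfpos _ (by linarith)
      have h4 : 0 < γ * L x * f (L x / 2) := mul_pos (mul_pos hγ h2) h3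
      linarith
  have hLanti : AntitoneOn L (Set.Ici 0) := by
    refine antitoneOn_of_deriv_nonpos (convex_Ici 0) hLdiff.continuous.continuousOn
      (hLdiff.differentiableOn) ?_
    intro x hx
    rw [interior_Ici] at hx
    exact hderiv_nonpos x (le_of_lt hx)
  -- rewrite the statement integral as G (L 0 / 2)
  have hδL2 : δ / 2 ≤ L 0 / 2 := by linarith
  have hTeq : (∫ z in (δ / 2)..(L 0 / 2), 1 / (γ * z * f z)) = G (L 0 / 2) := by
    apply intervalIntegral.integral_congr
    intro z hz
    rw [Set.uIcc_of_le hδL2] at hz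
    have hzc : c ≤ z := by
      have := hz.1; simp only [hcdef]; linarith
    have hmz : max z c = z := max_eq_left hzc
    simp [hhdef, hgdef, hmz, one_div]
  have hT0 : 0 ≤ G (L 0 / 2) := by
    have := hstep (δ/2) (L 0 / 2) hδL2
    have h0 : 0 ≤ (L 0 / 2 - δ/2) * h (L 0 / 2) := by
      have := hhpos (L 0 / 2); nlinarith
    have h0 : G (δ/2) = 0 := by simp [hGdef]
    have hGL := hGsub (δ/2) (L 0 / 2)
    rw [h0, sub_zero] at hGL
    rw [hGL]; linarith
  have ht0 : 0 ≤ t := le_trans hT0 (hTeq ▸ ht)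
  by_contra hcon
  push_neg at hcon
  have hLx : ∀ x ∈ Set.Icc (0:ℝ) t, δ < L x := by
    intro x hx
    exact lt_of_lt_of_le hcon (hLanti hx.1 ht0 hx.2)
  -- the fencing argument
  set F : ℝ → ℝ := fun s => G (L s / 2) + s with hFdef
  have hFcont : Continuous F :=
    (hGcont.comp ((hLdiff.continuous).div_const 2)).add continuous_id
  have key : F t ≤ G (L 0 / 2) := by
    have := image_le_of_liminf_slope_right_le_deriv_boundary (f := F) (a := 0) (b := t)
      (B := fun _ => G (L 0 / 2)) (B' := fun _ => 0) hFcont.continuousOn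
      (by simp [hFdef]) continuousOn_const
      (fun x _ => hasDerivWithinAt_const x _ _) ?_ (Set.right_mem_Icc.2 ht0)
    · exact this
    intro x hx r hr
    have hx0 : 0 ≤ x := hx.1
    have hLxδ : δ < L x := hLx x ⟨hx.1, hx.2.le⟩
    set c₀ : ℝ := h (L x / 2) / 2 with hc0def
    have hc0pos : 0 < c₀ := by have := hhpos (L x / 2); positivity
    -- h (L x / 2) = (γ * (L x / 2) * f (L x / 2))⁻¹
    have hmx : max (L x / 2) c = L x / 2 := max_eq_left (by simp only [hcdef]; linarith)
    have hhx : h (L x / 2) = (γ * (L x / 2) * f (L x / 2))⁻¹ := by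
      simp [hhdef, hgdef, hmx]
    -- limit of the slope bound
    have hslopeL : Filter.Tendsto (slope L x) (nhdsWithin x (Set.Ioi x)) (nhds (deriv L x)) := by
      have h1 : Filter.Tendsto (slope L x) (nhdsWithin x {x}ᶜ) (nhds (deriv L x)) :=
        hasDerivAt_iff_tendsto_slope.mp (hLdiff x).hasDerivAt
      exact h1.mono_left (nhdsWithin_mono x fun z hz => ne_of_gt hz)
    have h1 : Filter.Tendsto (fun z => 1 + slope L x z * c₀) (nhdsWithin x (Set.Ioi x))
        (nhds (1 + deriv L x * c₀)) :=
      Filter.Tendsto.add tendsto_const_nhds (hslopeL.mul tendsto_const_nhds)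
    have hfx : 0 < f (L x / 2) := hfpos _ (by linarith)
    have hlim_le : 1 + deriv L x * c₀ ≤ 0 := by
      have hode' := hode x hx0
      have hP : (0:ℝ) < γ * (L x / 2) * f (L x / 2) :=
        mul_pos (mul_pos hγ (by linarith)) hfx
      have hkey : (γ * (L x / 2) * f (L x / 2)) * (γ * (L x / 2) * f (L x / 2))⁻¹ = 1 :=
        mul_inv_cancel₀ hP.ne'
      have hprod : (-γ * L x * f (L x / 2)) * c₀ = -1 := by
        rw [hc0def, hhx]
        linear_combination (-1 : ℝ) * hkey
      have h2 : deriv L x * c₀ ≤ (-γ * L x * f (L x / 2)) * c₀ :=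
        mul_le_mul_of_nonneg_right hode' hc0pos.le
      rw [hprod] at h2
      linarith
    have h2 : ∀ᶠ z in nhdsWithin x (Set.Ioi x), 1 + slope L x z * c₀ < r :=
      h1.eventually_lt_const (lt_of_le_of_lt hlim_le hr)
    have h3 : ∀ᶠ z in nhdsWithin x (Set.Ioi x), slope F x z ≤ 1 + slope L x z * c₀ := by
      filter_upwards [self_mem_nhdsWithin] with z hz
      have hxz : x < z := hz
      have hzx : 0 < z - x := by linarith
      have hLzx : L z ≤ L x := hLanti (Set.mem_Ici.2 hx0) (Set.mem_Ici.2 (by linarith)) hxz.le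
      have hG1 : G (L z / 2) - G (L x / 2) ≤ (L z - L x) * c₀ := by
        have hsub := hGsub (L z / 2) (L x / 2)
        have hs := hstep (L z / 2) (L x / 2) (by linarith)
        have : (L x / 2 - L z / 2) * h (L x / 2) ≤ G (L x / 2) - G (L z / 2) := by
          rw [hsub]; exact hs
        rw [hc0def]; linarith
      have hF : F z - F x = (G (L z / 2) - G (L x / 2)) + (z - x) := by
        simp only [hFdef]; ring
      rw [slope_def_field, slope_def_field, div_le_iff₀ hzx]
      have e : (1 + (L z - L x) / (z - x) * c₀) * (z - x) = (z - x) + (L z - L x) * c₀ := by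
        field_simp
      rw [e, hF]
      linarith [hG1]
    exact ((h3.and h2).mono fun z hz => lt_of_le_of_lt hz.1 hz.2).frequently
  -- conclude
  have hLt2 : δ / 2 < L t / 2 := by linarith
  have hGt : 0 < G (L t / 2) := by
    have hs := hstep (δ/2) (L t / 2) hLt2.le
    have h0 : G (δ/2) = 0 := by simp [hGdef]
    have hGL := hGsub (δ/2) (L t / 2)
    rw [h0, sub_zero] at hGL
    have hp := hhpos (L t / 2)
    rw [hGL]
    nlinarith
  rw [hTeq] at ht
  simp only [hFdef] at key
  linarith
end

section
/- Let Z_t be the continuous-time random walk of rate 2 on the torus (Z/LZ)^d with d ≥ 2, whose coordinates evolve as independent rate-2 random walks on the cycle. Assume the one-dimensional heat kernel bound P(X_t = y) ≤ (1/j)(1+e^{−γl}) for t ≥ j²l. Then for every ε ≥ 1/L^d and every t ≥ ε^{−2/d}·(4/γ)·log d, we have P(Z_t = z | Z_0 = x) ≤ (7/6)·ε for all x, z. -/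
/-!
Put `a = ε^{-1/d}`, so that `a ≤ L` and `ε^{1/d} = 1/a`, and apply the one-dimensional bound
with `j = ⌈a⌉` and `l = t/j²`. Since `γ l ≥ 4 log d · (a/j)²` and `y ↦ y (1 + e^{-c y²})` is
increasing, each coordinate factor is at most `(1/a)(1 + e^{-4 log d}) = ε^{1/d} (1 + 1/d⁴)`, so
the product over the `d` coordinates is at most `ε (1 + 1/d⁴)^d ≤ (7/6) ε`.
-/

open Real

lemma two_mul_mul_exp_neg_le_one (s : ℝ) : 2 * s * exp (-s) ≤ 1 :=
  calc 2 * s * exp (-s) ≤ 2 * exp (s - 1) * exp (-s) := by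
        gcongr; linarith [add_one_le_exp (s - 1)]
    _ = 2 * exp (-1) := by rw [mul_assoc, ← exp_add]; ring_nf
    _ ≤ exp 1 * exp (-1) := by gcongr; linarith [add_one_le_exp 1]
    _ = 1 := by rw [← exp_add]; simp

lemma monotone_mul_one_add_exp_neg_mul_sq (c : ℝ) :
    Monotone fun y : ℝ => y * (1 + exp (-(c * y ^ 2))) := by
  have hderiv : ∀ y : ℝ, HasDerivAt (fun y : ℝ => y * (1 + exp (-(c * y ^ 2))))
      (1 + exp (-(c * y ^ 2)) - 2 * (c * y ^ 2) * exp (-(c * y ^ 2))) y := fun y => by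
    have hquad : HasDerivAt (fun x : ℝ => -(c * x ^ 2)) (-(c * (2 * y))) y :=
      ((hasDerivAt_pow 2 y).const_mul c).neg.congr_deriv (by norm_num)
    exact ((hasDerivAt_id' y).mul (hquad.exp.const_add 1)).congr_deriv (by ring)
  refine monotone_of_deriv_nonneg (fun y => (hderiv y).differentiableAt) fun y => ?_
  rw [(hderiv y).deriv]
  linarith [two_mul_mul_exp_neg_le_one (c * y ^ 2), exp_pos (-(c * y ^ 2))]

lemma one_div_mul_one_add_exp_le {a b : ℝ} (c : ℝ) (ha : 0 < a) (hab : a ≤ b) :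
    1 / b * (1 + exp (-(c * (a / b) ^ 2))) ≤ 1 / a * (1 + exp (-c)) := by
  have hb : 0 < b := ha.trans_le hab
  calc 1 / b * (1 + exp (-(c * (a / b) ^ 2)))
      = a / b * (1 + exp (-(c * (a / b) ^ 2))) / a := by field_simp
    _ ≤ 1 * (1 + exp (-(c * 1 ^ 2))) / a := div_le_div_of_nonneg_right
        (monotone_mul_one_add_exp_neg_mul_sq c (div_le_one_of_le₀ hab hb.le)) ha.le
    _ = 1 / a * (1 + exp (-c)) := by simp [div_eq_inv_mul]

lemma le_one_div_mul_of_heat_kernel_bound {L : ℕ} {γ a c t q : ℝ} (ha : 0 < a) (haL : a ≤ L)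
    (ht : 0 ≤ t) (hct : c * a ^ 2 ≤ γ * t)
    (hq : ∀ j : ℕ, 1 ≤ j → j ≤ L → ∀ l : ℝ, 0 ≤ l → (j : ℝ) ^ 2 * l ≤ t →
      q ≤ 1 / j * (1 + exp (-γ * l))) :
    q ≤ 1 / a * (1 + exp (-c)) := by
  set j := ⌈a⌉₊
  have haj : a ≤ j := Nat.le_ceil a
  have hj : (0 : ℝ) < j := ha.trans_le haj
  calc q ≤ 1 / j * (1 + exp (-γ * (t / j ^ 2))) :=
        hq j (Nat.one_le_iff_ne_zero.mpr (Nat.ceil_pos.mpr ha).ne') (Nat.ceil_le.mpr haL)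
          _ (by positivity) (by rw [mul_div_cancel₀ _ (by positivity)])
    _ ≤ 1 / j * (1 + exp (-(c * (a / j) ^ 2))) := by
        gcongr 1 / _ * (1 + exp ?_)
        rw [neg_mul, neg_le_neg_iff, div_pow, ← mul_div_assoc, ← mul_div_assoc]
        gcongr
    _ ≤ 1 / a * (1 + exp (-c)) := one_div_mul_one_add_exp_le c ha haj

lemma one_add_one_div_pow_four_pow_le {d : ℕ} (hd : 2 ≤ d) :
    (1 + 1 / (d : ℝ) ^ 4) ^ d ≤ 7 / 6 := by
  have hd3 : 1 / (d : ℝ) ^ 3 ≤ 1 / 8 := by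
    have : (2 : ℝ) ^ 3 ≤ (d : ℝ) ^ 3 := by gcongr; exact_mod_cast hd
    exact one_div_le_one_div_of_le (by norm_num) (by linarith)
  calc (1 + 1 / (d : ℝ) ^ 4) ^ d ≤ exp (1 / (d : ℝ) ^ 4) ^ d := by
        gcongr; linarith [add_one_le_exp (1 / (d : ℝ) ^ 4)]
    _ = exp (1 / (d : ℝ) ^ 3) := by
        rw [← exp_nat_mul]
        congr 1
        have : (d : ℝ) ≠ 0 := by positivity
        field_simp
    _ ≤ exp (1 / 8) := by gcongr
    _ ≤ 1 / (1 - 1 / 8) := exp_bound_div_one_sub_of_interval (by norm_num) (by norm_num)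
    _ ≤ 7 / 6 := by norm_num

/-- Proposition 9 of the paper. The rate-2 random walk on the torus `(ℤ/Lℤ)^d`,
`d ≥ 2`, has independent coordinates, each a rate-2 walk on the cycle, so its heat
kernel is the product of one-dimensional kernels. Assuming the one-dimensional bound
`P(X_t = y) ≤ (1/j)(1 + e^{−γl})` for `1 ≤ j ≤ L`, `l ≥ 0`, `t ≥ j²l`, we get: for
every `ε ≥ 1/L^d` and every `t ≥ ε^{−2/d}·(4/γ)·log d`,
`P(Z_t = z | Z_0 = x) ≤ (7/6)·ε` for all `x, z`. -/
theorem stmt_5 (L d : ℕ) (hL : 1 ≤ L) (hd : 2 ≤ d) (γ : ℝ) (hγ : 0 < γ)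
    (p1 : ℝ → ZMod L → ZMod L → ℝ)
    (hp1nonneg : ∀ t x y, 0 ≤ p1 t x y)
    (hker : ∀ (j : ℕ), 1 ≤ j → j ≤ L → ∀ l t : ℝ, 0 ≤ l → (j : ℝ) ^ 2 * l ≤ t →
      ∀ x y : ZMod L, p1 t x y ≤ (1 / j) * (1 + Real.exp (-γ * l))) :
    ∀ ε t : ℝ, 1 / (L : ℝ) ^ d ≤ ε →
      ε ^ (-(2 : ℝ) / d) * (4 / γ) * Real.log d ≤ t →
      ∀ x z : Fin d → ZMod L, ∏ i, p1 t (x i) (z i) ≤ 7 / 6 * ε := by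
  intro ε t hε ht x z
  have hε0 : 0 < ε := lt_of_lt_of_le (by positivity) hε
  set s := ε ^ ((d : ℝ)⁻¹)
  have hs : 0 < s := by positivity
  have hsd : s ^ d = ε := rpow_inv_natCast_pow hε0.le (by omega)
  have hsL : s⁻¹ ≤ L := by
    have : (L : ℝ)⁻¹ ^ d ≤ s ^ d := by rwa [hsd, inv_pow, ← one_div]
    exact inv_le_of_inv_le₀ (by positivity)
      ((pow_le_pow_iff_left₀ (by positivity) hs.le (by omega)).mp this)
  have hεs : ε ^ (-(2 : ℝ) / d) = s⁻¹ ^ 2 := by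
    rw [show -(2 : ℝ) / d = (d : ℝ)⁻¹ * -2 by ring, rpow_mul hε0.le, rpow_neg hs.le,
      inv_pow]
    norm_cast
  have hlog : 0 ≤ log d := log_nonneg (by exact_mod_cast (by omega : 1 ≤ d))
  have ht0 : 0 ≤ t := le_trans (by positivity) ht
  have hct : 4 * log d * s⁻¹ ^ 2 ≤ γ * t := by
    rw [hεs] at ht
    calc 4 * log d * s⁻¹ ^ 2 = γ * (s⁻¹ ^ 2 * (4 / γ) * log d) := by field_simp
      _ ≤ γ * t := by gcongr
  have hexp : exp (-(4 * log d)) = 1 / (d : ℝ) ^ 4 := by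
    rw [exp_neg, show 4 * log d = log ((d : ℝ) ^ 4) by rw [log_pow]; norm_num,
      exp_log (by positivity), one_div]
  have hfactor : ∀ i, p1 t (x i) (z i) ≤ s * (1 + 1 / (d : ℝ) ^ 4) := fun i => by
    simpa [hexp] using le_one_div_mul_of_heat_kernel_bound (inv_pos.2 hs) hsL ht0 hct
      fun j hj hjL l hl hjl => hker j hj hjL l t hl hjl (x i) (z i)
  calc ∏ i, p1 t (x i) (z i) ≤ (s * (1 + 1 / (d : ℝ) ^ 4)) ^ d := by
        simpa using Finset.prod_le_prod (s := Finset.univ)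
          (fun i _ => hp1nonneg t (x i) (z i)) fun i _ => hfactor i
    _ = ε * (1 + 1 / (d : ℝ) ^ 4) ^ d := by rw [mul_pow, hsd]
    _ ≤ ε * (7 / 6) := by gcongr; exact one_add_one_div_pow_four_pow_le hd
    _ = 7 / 6 * ε := mul_comm _ _
end

section
/- Let (r_j)_{j≥0} be the Markov chain on {0,1,…,m} with r_{j+1} = r_j ± Δ(r_j) with probability 1/2 each, where Δ(x) = ⌈min(x, m−x)/3⌉, and Δ(0)=Δ(m)=0 so 0 and m are absorbing. If r_0 = 1, then the chain is a bounded martingale, it is absorbed at 0 or m almost surely, and the probability of absorption at m equals 1/m. -/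
open MeasureTheory ProbabilityTheory Filter Topology Function
open scoped ENNReal

/-!
Writing `ξ_j = ±1` for the `j`-th fair coin, `r_{j+1} = r_j + Δ(r_j) ξ_j` with `ξ_j` independent
of the past and of mean zero, so `r` is a martingale; since `Δ(x) ≤ min(x, m - x)` it stays in
`{0, …, m}` and `0`, `m` are absorbing. As `Δ ≥ 1` strictly inside, `m` consecutive tails
drive the chain to an endpoint, and by the second Borel–Cantelli lemma applied to disjoint blocks
of `m` coins such a run occurs almost surely. Hence `r_j → m · 1{r hits m}` almost surely, and
bounded convergence together with `E r_j = r_0` gives `m · P(r hits m) = r_0 = 1`.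
-/

def IsCoinWalk (Δ : ℕ → ℕ) (b : ℕ → Bool) (s : ℕ → ℕ) : Prop :=
  ∀ j, s (j + 1) = if b j then s j + Δ (s j) else s j - Δ (s j)

namespace IsCoinWalk

variable {m : ℕ} {Δ : ℕ → ℕ} {b : ℕ → Bool} {s : ℕ → ℕ}

theorem le (h : IsCoinWalk Δ b s) (hΔ : ∀ x, Δ x ≤ min x (m - x)) (h0 : s 0 ≤ m) (j : ℕ) :
    s j ≤ m := by
  induction j with
  | zero => exact h0
  | succ j ih =>
    have := hΔ (s j)
    rw [h j]
    split <;> omega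

theorem eq_of_absorbed (h : IsCoinWalk Δ b s) (hΔ : ∀ x, Δ x ≤ min x (m - x)) {n : ℕ}
    (hn : s n = 0 ∨ s n = m) {j : ℕ} (hj : n ≤ j) : s j = s n := by
  induction j, hj using Nat.le_induction with
  | base => rfl
  | succ j _ ih =>
    have := hΔ (s j)
    rw [h j, ih]
    rw [ih] at this
    split <;> omega

theorem succ_le_pred (h : IsCoinWalk Δ b s) (hpos : ∀ x, 0 < x → x < m → 0 < Δ x) {k : ℕ}
    (hk : s k < m) (hb : b k = false) : s (k + 1) ≤ s k - 1 := by
  have := hpos (s k)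
  rw [h k, hb, if_neg Bool.false_ne_true]
  omega

theorem absorbed_of_tails (h : IsCoinWalk Δ b s) (hΔ : ∀ x, Δ x ≤ min x (m - x))
    (hpos : ∀ x, 0 < x → x < m → 0 < Δ x) {n : ℕ} (hn : s n ≤ m)
    (htails : ∀ k ∈ Finset.Ico n (n + m), b k = false) : s (n + m) = 0 ∨ s (n + m) = m := by
  rcases hn.eq_or_lt with hnm | hnm
  · exact Or.inr ((h.eq_of_absorbed hΔ (Or.inr hnm) (Nat.le_add_right n m)).trans hnm)
  have descent : ∀ t ≤ m, s (n + t) ≤ s n - t := by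
    intro t
    induction t with
    | zero => simp
    | succ t ih =>
      intro ht
      have hprev := ih (by omega)
      have := h.succ_le_pred hpos (k := n + t) (by omega)
        (htails _ (Finset.mem_Ico.2 ⟨by omega, by omega⟩))
      rw [← Nat.add_assoc]
      omega
  have := descent m le_rfl
  omega

open Classical in
theorem tendsto_of_absorbed (h : IsCoinWalk Δ b s) (hΔ : ∀ x, Δ x ≤ min x (m - x))
    (hm : m ≠ 0) {n : ℕ} (hn : s n = 0 ∨ s n = m) :
    Tendsto (fun j => (s j : ℝ)) atTop (𝓝 (if ∃ J, s J = m then (m : ℝ) else 0)) := by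
  have hconst : ∀ j ≥ n, (s j : ℝ) = s n := fun j hj => by
    rw [h.eq_of_absorbed hΔ hn hj]
  refine tendsto_atTop_of_eventually_const (i₀ := n) fun j hj => (hconst j hj).trans ?_
  rcases hn with h0 | hm'
  · have hnever : ¬∃ J, s J = m := by
      rintro ⟨J, hJ⟩
      rcases le_total n J with hnJ | hJn
      · have := h.eq_of_absorbed hΔ (Or.inl h0) hnJ
        omega
      · have := h.eq_of_absorbed hΔ (Or.inr hJ) hJn
        omega
    simp [hnever, h0]
  · simp [show ∃ J, s J = m from ⟨n, hm'⟩, hm']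

end IsCoinWalk

theorem pairwise_disjoint_Ico_mul (n : ℕ) :
    Pairwise (Disjoint on fun N : ℕ => Finset.Ico (N * n) (N * n + n)) := by
  refine (pairwise_disjoint_on _).2 fun N N' hlt => Finset.disjoint_left.2 fun k hk hk' => ?_
  rw [Finset.mem_Ico] at hk hk'
  have := Nat.mul_le_mul_right n (Nat.succ_le_of_lt hlt)
  rw [Nat.succ_mul] at this
  omega

section Independence

variable {Ω ι κ β : Type*} {mΩ : MeasurableSpace Ω} {μ : Measure Ω} [MeasurableSpace β]

theorem ProbabilityTheory.iIndepFun.iIndepSet_biInter_preimage [DecidableEq κ]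
    {X : κ → Ω → β} (hXmeas : ∀ k, Measurable (X k)) (hX : iIndepFun X μ)
    {I : ι → Finset κ} (hI : Pairwise (Disjoint on I)) {t : Set β} (ht : MeasurableSet t) :
    iIndepSet (fun i => ⋂ k ∈ I i, X k ⁻¹' t) μ := by
  have hmeas : ∀ k, MeasurableSet[MeasurableSpace.comap (X k) inferInstance] (X k ⁻¹' t) :=
    fun k => ⟨t, ht, rfl⟩
  have hblock : ∀ i, μ (⋂ k ∈ I i, X k ⁻¹' t) = ∏ k ∈ I i, μ (X k ⁻¹' t) := fun i =>
    hX.iIndep.meas_biInter fun k _ => hmeas k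
  refine (iIndepSet_iff_meas_biInter fun i => ?_).2 fun S => ?_
  · exact Finset.measurableSet_biInter _ fun k _ => hXmeas k ht
  · rw [← Finset.set_biInter_biUnion, hX.iIndep.meas_biInter fun k _ => hmeas k,
      Finset.prod_biUnion (hI.set_pairwise _)]
    simp only [hblock]

theorem ProbabilityTheory.iIndepFun.ae_exists_block_mem [IsProbabilityMeasure μ]
    {X : ℕ → Ω → β} (hXmeas : ∀ k, Measurable (X k)) (hX : iIndepFun X μ) {t : Set β}
    (ht : MeasurableSet t) {p : ℝ≥0∞} (hp : p ≠ 0) (hXt : ∀ k, μ (X k ⁻¹' t) = p) (n : ℕ) :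
    ∀ᵐ ω ∂μ, ∃ N, ∀ k ∈ Finset.Ico (N * n) (N * n + n), X k ω ∈ t := by
  set E : ℕ → Set Ω := fun N => ⋂ k ∈ Finset.Ico (N * n) (N * n + n), X k ⁻¹' t
  have hEmeas : ∀ N, MeasurableSet (E N) := fun N =>
    Finset.measurableSet_biInter _ fun k _ => hXmeas k ht
  have hEprob : ∀ N, μ (E N) = p ^ n := fun N => by
    rw [hX.iIndep.meas_biInter fun k _ => ⟨t, ht, rfl⟩, Finset.prod_congr rfl fun k _ => hXt k,
      Finset.prod_const, Nat.card_Ico, Nat.add_sub_cancel_left]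
  have hlimsup : μ (limsup E atTop) = 1 :=
    measure_limsup_eq_one hEmeas
      (hX.iIndepSet_biInter_preimage hXmeas (pairwise_disjoint_Ico_mul n) ht) <| by
      simp only [hEprob]
      exact ENNReal.tsum_const_eq_top_of_ne_zero (pow_ne_zero n hp)
  have hae : ∀ᵐ ω ∂μ, ω ∈ limsup E atTop :=
    (ae_mem_iff_measure_eq (MeasurableSet.measurableSet_limsup hEmeas).nullMeasurableSet).2
      (by rw [hlimsup, measure_univ])
  filter_upwards [hae] with ω hω
  obtain ⟨N, hN⟩ := (mem_limsup_iff_frequently_mem.1 hω).exists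
  exact ⟨N, fun k hk => Set.mem_iInter₂.1 hN k hk⟩

end Independence

section Martingale

variable {Ω : Type*} {mΩ : MeasurableSpace Ω} {μ : Measure Ω} [IsFiniteMeasure μ]
  {ℱ : Filtration ℕ mΩ}

theorem martingale_of_eq_add_mul_indep {X D ξ : ℕ → Ω → ℝ} (hX : StronglyAdapted ℱ X)
    (hXint : ∀ n, Integrable (X n) μ) (hD : StronglyAdapted ℱ D)
    (hDξint : ∀ n, Integrable (D n * ξ n) μ) (hξmeas : ∀ n, Measurable (ξ n))
    (hξint : ∀ n, Integrable (ξ n) μ)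
    (hξindep : ∀ n, Indep (MeasurableSpace.comap (ξ n) inferInstance) (ℱ n) μ)
    (hξmean : ∀ n, μ[ξ n] = 0) (hstep : ∀ n, X (n + 1) = X n + D n * ξ n) :
    Martingale X ℱ μ := by
  refine martingale_nat hX hXint fun n => ?_
  have hξcond : μ[ξ n | ℱ n] =ᵐ[μ] 0 := by
    have := condExp_indep_eq (hξmeas n).comap_le (ℱ.le n)
      (comap_measurable (ξ n)).stronglyMeasurable (hξindep n)
    rwa [hξmean n] at this
  have hDξcond : μ[D n * ξ n | ℱ n] =ᵐ[μ] 0 := by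
    filter_upwards [condExp_mul_of_stronglyMeasurable_left (hD n) (hDξint n) (hξint n),
      hξcond] with ω hmul hzero
    simp [hmul, hzero]
  calc X n = μ[X n | ℱ n] + 0 := by
        rw [condExp_of_stronglyMeasurable (ℱ.le n) (hX n) (hXint n), add_zero]
    _ =ᵐ[μ] μ[X n | ℱ n] + μ[D n * ξ n | ℱ n] := (EventuallyEq.refl _ _).add hDξcond.symm
    _ =ᵐ[μ] μ[X (n + 1) | ℱ n] := by
      rw [hstep n]
      exact (condExp_add (hXint n) (hDξint n) _).symm

theorem MeasureTheory.Martingale.integral_eq_of_tendsto {X : ℕ → Ω → ℝ}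
    (hX : Martingale X ℱ μ) {C : ℝ} (hbdd : ∀ n ω, |X n ω| ≤ C) {g : Ω → ℝ}
    (hlim : ∀ᵐ ω ∂μ, Tendsto (X · ω) atTop (𝓝 (g ω))) :
    ∫ ω, g ω ∂μ = ∫ ω, X 0 ω ∂μ := by
  have hconst : ∀ n, ∫ ω, X n ω ∂μ = ∫ ω, X 0 ω ∂μ := fun n => by
    simpa using (hX.setIntegral_eq (Nat.zero_le n) MeasurableSet.univ).symm
  have hconv := tendsto_integral_of_dominated_convergence (fun _ => C)
    (fun n => (hX.integrable n).aestronglyMeasurable) (integrable_const C)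
    (fun n => ae_of_all _ fun ω => hbdd n ω) hlim
  simp only [hconst] at hconv
  exact tendsto_nhds_unique hconv tendsto_const_nhds

end Martingale

section CoinWalk

variable {Ω : Type*} {mΩ : MeasurableSpace Ω} {μ : Measure Ω} {B : ℕ → Ω → Bool}

abbrev pastCoins (B : ℕ → Ω → Bool) (n : ℕ) : MeasurableSpace Ω :=
  ⨆ k ∈ Set.Iio n, MeasurableSpace.comap (B k) inferInstance

theorem pastCoins_mono : Monotone (pastCoins B) := fun _ _ hab =>
  biSup_mono fun _ hk => lt_of_lt_of_le hk hab

theorem measurable_pastCoins_succ (n : ℕ) : Measurable[pastCoins B (n + 1)] (B n) :=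
  Measurable.of_comap_le <|
    le_biSup (fun k => MeasurableSpace.comap (B k) inferInstance) (Nat.lt_succ_self n)

theorem indep_comap_pastCoins (hBmeas : ∀ k, Measurable (B k)) (hB : iIndepFun B μ) (n : ℕ) :
    Indep (MeasurableSpace.comap (B n) inferInstance) (pastCoins B n) μ := by
  have := indep_iSup_of_disjoint (fun k => (hBmeas k).comap_le) hB.iIndep
    (S := {n}) (T := Set.Iio n) (by simp)
  rwa [iSup_singleton] at this

theorem measurable_pastCoins_of_isCoinWalk {Δ : ℕ → ℕ} {r : ℕ → Ω → ℕ} {x₀ : ℕ}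
    (hr0 : ∀ ω, r 0 ω = x₀) (hr : ∀ ω, IsCoinWalk Δ (B · ω) (r · ω)) (n : ℕ) :
    Measurable[pastCoins B n] (r n) := by
  induction n with
  | zero =>
    rw [show r 0 = fun _ => x₀ from funext hr0]
    exact measurable_const
  | succ n ih =>
    rw [show r (n + 1) = fun ω => if B n ω then r n ω + Δ (r n ω) else r n ω - Δ (r n ω) from
      funext fun ω => hr ω n]
    have hrn := ih.mono (pastCoins_mono (Nat.le_succ n)) le_rfl
    exact Measurable.ite (measurable_pastCoins_succ n (measurableSet_singleton true))
      ((measurable_from_top (f := fun x : ℕ => x + Δ x)).comp hrn)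
      ((measurable_from_top (f := fun x : ℕ => x - Δ x)).comp hrn)

theorem integral_sign_eq_zero [IsProbabilityMeasure μ] {b : Ω → Bool} (hb : Measurable b)
    (hfair : μ {ω | b ω = true} = 1 / 2) :
    ∫ ω, (if b ω then (1 : ℝ) else -1) ∂μ = 0 := by
  have hs : MeasurableSet {ω | b ω = true} := hb (measurableSet_singleton true)
  have hsign : (fun ω => if b ω then (1 : ℝ) else -1) =
      fun ω => Set.indicator {ω | b ω = true} (fun _ => (2 : ℝ)) ω - 1 := by
    funext ω
    cases h : b ω <;> norm_num [h]
  rw [hsign, integral_sub ((integrable_const (2 : ℝ)).indicator hs) (integrable_const 1),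
    integral_indicator_const _ hs, integral_const, measureReal_def, hfair]
  simp

variable [IsProbabilityMeasure μ] {m : ℕ} {Δ : ℕ → ℕ} {r : ℕ → Ω → ℕ}

theorem martingale_of_isCoinWalk (hBmeas : ∀ k, Measurable (B k)) (hB : iIndepFun B μ)
    (hBfair : ∀ k, μ {ω | B k ω = true} = 1 / 2) (hΔ : ∀ x, Δ x ≤ min x (m - x))
    (hle : ∀ j ω, r j ω ≤ m) (hr : ∀ ω, IsCoinWalk Δ (B · ω) (r · ω))
    {x₀ : ℕ} (hr0 : ∀ ω, r 0 ω = x₀)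
    (hrmeas : ∀ j, StronglyMeasurable fun ω => (r j ω : ℝ)) :
    Martingale (fun j ω => (r j ω : ℝ)) (Filtration.natural (fun j ω => (r j ω : ℝ)) hrmeas)
      μ := by
  set ℱ := Filtration.natural (fun j ω => (r j ω : ℝ)) hrmeas
  set ξ : ℕ → Ω → ℝ := fun n ω => if B n ω then 1 else -1
  have hrℱ : StronglyAdapted ℱ fun j ω => (r j ω : ℝ) := Filtration.stronglyAdapted_natural hrmeas
  have hℱ_le : ∀ n, ℱ n ≤ pastCoins B n := fun n => iSup₂_le fun j hj =>
    ((measurable_from_top (f := fun x : ℕ => (x : ℝ))).comp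
      ((measurable_pastCoins_of_isCoinWalk hr0 hr j).mono (pastCoins_mono hj) le_rfl)).comap_le
  -- `Δ (r n)` is recovered from the real-valued `r n` through `⌊·⌋₊`.
  have hDℱ : StronglyAdapted ℱ fun n ω => (Δ (r n ω) : ℝ) := fun n => by
    have hfloor : (fun ω => (Δ (r n ω) : ℝ)) =
        (fun x : ℝ => (Δ ⌊x⌋₊ : ℝ)) ∘ fun ω => (r n ω : ℝ) := by
      funext ω; simp
    show StronglyMeasurable[ℱ n] fun ω => (Δ (r n ω) : ℝ)
    rw [hfloor]
    exact (((measurable_from_top (f := fun k : ℕ => (Δ k : ℝ))).comp Nat.measurable_floor).comp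
      (hrℱ n).measurable).stronglyMeasurable
  have hξB : ∀ n, Measurable[MeasurableSpace.comap (B n) inferInstance] (ξ n) := fun n =>
    (measurable_from_top (f := fun b : Bool => if b then (1 : ℝ) else -1)).comp
      (comap_measurable (B n))
  have hξmeas : ∀ n, Measurable (ξ n) := fun n => (hξB n).mono (hBmeas n).comap_le le_rfl
  have hξbdd : ∀ n ω, ‖ξ n ω‖ ≤ 1 := fun n ω => by
    simp only [ξ]; split <;> simp
  have hDbdd : ∀ n ω, ‖(Δ (r n ω) : ℝ)‖ ≤ m := fun n ω => by
    have := hΔ (r n ω)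
    have := hle n ω
    rw [Real.norm_natCast]
    exact_mod_cast (by omega : Δ (r n ω) ≤ m)
  have hDξint : ∀ n, Integrable ((fun ω => (Δ (r n ω) : ℝ)) * ξ n) μ := fun n =>
    Integrable.of_bound
      (((hDℱ n).mono (ℱ.le n)).measurable.mul (hξmeas n)).aestronglyMeasurable (m * 1)
      (ae_of_all _ fun ω => by
        rw [Pi.mul_apply, norm_mul]
        exact mul_le_mul (hDbdd n ω) (hξbdd n ω) (norm_nonneg _) (Nat.cast_nonneg m))
  have hstep : ∀ n, (fun ω => (r (n + 1) ω : ℝ)) =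
      (fun ω => (r n ω : ℝ)) + (fun ω => (Δ (r n ω) : ℝ)) * ξ n := fun n => by
    funext ω
    simp only [Pi.add_apply, Pi.mul_apply, ξ, hr ω n]
    split
    · push_cast; ring
    · rw [Nat.cast_sub (min_le_left _ _ |>.trans' (hΔ _))]; ring
  exact martingale_of_eq_add_mul_indep hrℱ
    (fun n => Integrable.of_bound (hrmeas n).aestronglyMeasurable m
      (ae_of_all _ fun ω => by rw [Real.norm_natCast]; exact_mod_cast hle n ω))
    hDℱ hDξint hξmeas
    (fun n => Integrable.of_bound (hξmeas n).aestronglyMeasurable 1 (ae_of_all _ (hξbdd n)))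
    (fun n => indep_of_indep_of_le_right (indep_of_indep_of_le_left
      (indep_comap_pastCoins hBmeas hB n) (hξB n).comap_le) (hℱ_le n))
    (fun n => integral_sign_eq_zero (hBmeas n) (hBfair n)) hstep

theorem ae_absorbed_of_isCoinWalk (hBmeas : ∀ k, Measurable (B k)) (hB : iIndepFun B μ)
    (hBfair : ∀ k, μ {ω | B k ω = true} = 1 / 2) (hΔ : ∀ x, Δ x ≤ min x (m - x))
    (hle : ∀ j ω, r j ω ≤ m) (hr : ∀ ω, IsCoinWalk Δ (B · ω) (r · ω))
    (hpos : ∀ x, 0 < x → x < m → 0 < Δ x) :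
    ∀ᵐ ω ∂μ, ∃ n, r n ω = 0 ∨ r n ω = m := by
  have htails : ∀ k, μ (B k ⁻¹' {false}) = 1 / 2 := fun k => by
    have hcompl : B k ⁻¹' {false} = {ω | B k ω = true}ᶜ := by ext ω; simp
    rw [hcompl, prob_compl_eq_one_sub (measurableSet_eq_fun (hBmeas k) measurable_const),
      hBfair k, ENNReal.sub_half ENNReal.one_ne_top]
  filter_upwards [hB.ae_exists_block_mem hBmeas (measurableSet_singleton false)
    (by norm_num) htails m] with ω ⟨N, hN⟩
  exact ⟨N * m + m, (hr ω).absorbed_of_tails hΔ hpos (hle _ ω) hN⟩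

theorem measure_exists_eq_of_isCoinWalk (hBmeas : ∀ k, Measurable (B k)) (hB : iIndepFun B μ)
    (hBfair : ∀ k, μ {ω | B k ω = true} = 1 / 2) (hΔ : ∀ x, Δ x ≤ min x (m - x))
    (hle : ∀ j ω, r j ω ≤ m) (hr : ∀ ω, IsCoinWalk Δ (B · ω) (r · ω))
    (hm : m ≠ 0) (hpos : ∀ x, 0 < x → x < m → 0 < Δ x)
    {x₀ : ℕ} (hr0 : ∀ ω, r 0 ω = x₀) (hrmeas : ∀ j, StronglyMeasurable fun ω => (r j ω : ℝ)) :
    μ {ω | ∃ J, r J ω = m} = x₀ / m := by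
  set A := {ω | ∃ J, r J ω = m}
  have hA : MeasurableSet A := by
    have hunion : A = ⋃ J, {ω | (r J ω : ℝ) = m} := by ext; simp [A]
    rw [hunion]
    exact .iUnion fun J => measurableSet_eq_fun (hrmeas J).measurable measurable_const
  have hlim : ∫ ω, A.indicator (fun _ => (m : ℝ)) ω ∂μ = ∫ ω, (r 0 ω : ℝ) ∂μ :=
    (martingale_of_isCoinWalk hBmeas hB hBfair hΔ hle hr hr0 hrmeas).integral_eq_of_tendsto
      (C := m) (fun j ω => by rw [Nat.abs_cast]; exact_mod_cast hle j ω) <| by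
      filter_upwards [ae_absorbed_of_isCoinWalk hBmeas hB hBfair hΔ hle hr hpos]
        with ω ⟨n, hn⟩
      classical
      rw [Set.indicator_apply]
      exact (hr ω).tendsto_of_absorbed hΔ hm hn
  rw [integral_indicator_const _ hA, smul_eq_mul, measureReal_def] at hlim
  simp only [hr0, integral_const, probReal_univ, one_smul] at hlim
  have hm0 : (0 : ℝ) < m := by exact_mod_cast Nat.pos_of_ne_zero hm
  rw [← ENNReal.ofReal_toReal (measure_ne_top μ A), eq_div_of_mul_eq hm0.ne' hlim,
    ENNReal.ofReal_div_of_pos hm0, ENNReal.ofReal_natCast, ENNReal.ofReal_natCast]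

end CoinWalk

/-- The depinking chain of the chameleon process (Section 3): `r_{j+1} = r_j ± Δ(r_j)`
with probability `1/2` each, where `Δ(x) = ⌈min(x, m−x)/3⌉` (so `Δ(0) = Δ(m) = 0` and
`0`, `m` are absorbing). Driven by i.i.d. fair coins `B j` and started at `r_0 = 1`,
the chain stays in `{0,…,m}`, is a (bounded) martingale with respect to its natural
filtration, is absorbed at `0` or `m` almost surely, and absorbs at `m` with
probability exactly `1/m`. -/
theorem stmt_9 {Ω : Type*} [MeasureSpace Ω] [IsProbabilityMeasure (ℙ : Measure Ω)]
    (m : ℕ) (hm : 1 ≤ m)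
    (B : ℕ → Ω → Bool) (hBmeas : ∀ j, Measurable (B j))
    (hBindep : iIndepFun B ℙ)
    (hBfair : ∀ j, ℙ {ω | B j ω = true} = 1 / 2)
    (Δ : ℕ → ℕ) (hΔ : ∀ x, Δ x = (min x (m - x) + 2) / 3)
    (r : ℕ → Ω → ℕ) (hr0 : ∀ ω, r 0 ω = 1)
    (hrec : ∀ j ω, r (j + 1) ω =
      if B j ω then r j ω + Δ (r j ω) else r j ω - Δ (r j ω))
    (hrmeas : ∀ j, StronglyMeasurable fun ω => ((r j ω : ℝ))) :
    (∀ j ω, r j ω ≤ m) ∧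
    Martingale (fun j ω => (r j ω : ℝ))
      (Filtration.natural (fun j ω => ((r j ω : ℝ))) hrmeas) ℙ ∧
    ℙ {ω | ∃ J, ∀ j, J ≤ j → r j ω = r J ω ∧ (r J ω = 0 ∨ r J ω = m)} = 1 ∧
    ℙ {ω | ∃ J, r J ω = m} = 1 / (m : ℝ≥0∞) := by
  have hΔle : ∀ x, Δ x ≤ min x (m - x) := fun x => by rw [hΔ]; omega
  have hΔpos : ∀ x, 0 < x → x < m → 0 < Δ x := fun x _ _ => by rw [hΔ]; omega
  have hwalk : ∀ ω, IsCoinWalk Δ (B · ω) (r · ω) := fun ω j => hrec j ω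
  have hle : ∀ j ω, r j ω ≤ m := fun j ω => (hwalk ω).le hΔle ((hr0 ω).trans_le hm) j
  refine ⟨hle, martingale_of_isCoinWalk hBmeas hBindep hBfair hΔle hle hwalk hr0 hrmeas,
    ?_, ?_⟩
  · refine (measure_congr (ae_eq_univ.2 (ae_iff.1 ?_))).trans measure_univ
    filter_upwards [ae_absorbed_of_isCoinWalk hBmeas hBindep hBfair hΔle hle hwalk hΔpos]
      with ω ⟨n, hn⟩
    exact ⟨n, fun j hj => ⟨(hwalk ω).eq_of_absorbed hΔle hn hj, hn⟩⟩
  · simpa using measure_exists_eq_of_isCoinWalk hBmeas hBindep hBfair hΔle hle hwalk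
      (by omega) hΔpos hr0 hrmeas
end
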